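/- (Theorem 6) For every odd integer p ≥ 1 and every odd positive integer m, one has m^p T_p(1, m) = Σ_{i=0}^{p} C(p,i) E_{p−i} E_i m^{p−i} − 2 E_p, where E_i denotes the i-th Euler number. -/

import Mathlib

open Finset

/-- The Euler numbers `E_n`, defined by `E_0 = 1` and the recurrence
`∑_{l=0}^{n} C(n,l) E_l + E_n = 0` for `n ≥ 1`. -/
def eulerNumber : ℕ → ℚ
  | 0 => 1
  | n + 1 => -(∑ l : Fin (n + 1), ((n + 1).choose l : ℚ) * eulerNumber l) / 2

/-- The Euler polynomials `E_n(x) = ∑_{l=0}^{n} C(n,l) E_l x^{n-l}`. -/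
noncomputable def eulerPoly (n : ℕ) (x : ℝ) : ℝ :=
  ∑ l ∈ Finset.range (n + 1), (n.choose l : ℝ) * (eulerNumber l : ℝ) * x ^ (n - l)

/-- The Euler function `Ē_p(x) = (-1)^⌊x⌋ E_p(x - ⌊x⌋)`. -/
noncomputable def eulerFun (p : ℕ) (x : ℝ) : ℝ := (-1 : ℝ) ^ ⌊x⌋ * eulerPoly p (x - ⌊x⌋)

/-- The Dedekind-type DC sum `T_p(h,k) = 2 ∑_{u=1}^{k-1} (-1)^{u-1} (u/k) Ē_p(hu/k)`. -/
noncomputable def dcSum (p h k : ℕ) : ℝ :=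
  2 * ∑ u ∈ Finset.Ico 1 k, (-1 : ℝ) ^ (u - 1) * ((u : ℝ) / k) * eulerFun p (h * u / k)

/-!
Let `ε` be the linear functional `X ^ n ↦ E_n` on real polynomials. The recurrence for the Euler
numbers says `ε(f(X + 1)) + ε(f) = 2 f(0)`; as `E_n(x) = ε((X + x) ^ n)`, this gives
`E_n(x + 1) + E_n(x) = 2 x ^ n`, and telescoping gives `∑_{u<m} (-1)^u 2 f(u) = ε(f) + ε(f(X + m))`
for odd `m`. Apply this to `f = X P` with `P(x) = m^p E_p(x/m)`, so that `m^{p+1} T_p(1, m)` is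
minus the left side. Since `P(X + m) = 2 X^p - P`, the two terms `ε(X P)` cancel, leaving
`2 E_{p+1} + 2 m E_p - m ε(P)`, where `ε(P) = ∑ C(p,i) E_{p-i} E_i m^{p-i}` and `E_{p+1} = 0`
because `p + 1` is even.
-/

open Polynomial

lemma sum_range_choose_mul_eulerNumber_add (n : ℕ) :
    ∑ l ∈ range (n + 1), (n.choose l : ℚ) * eulerNumber l + eulerNumber n = 2 * 0 ^ n := by
  cases n with
  | zero => norm_num [eulerNumber]
  | succ n =>
    rw [sum_range_succ,
      ← Fin.sum_univ_eq_sum_range (fun l => ((n + 1).choose l : ℚ) * eulerNumber l),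
      Nat.choose_self, eulerNumber.eq_2]
    ring

section Functional

variable {K : Type*} [Field K]

def eulerFunctional : K[X] →ₗ[K] K :=
  lsum fun n => LinearMap.mulRight K (eulerNumber n : K)

lemma eulerFunctional_monomial (n : ℕ) (a : K) :
    eulerFunctional (monomial n a) = a * eulerNumber n := by
  simp [eulerFunctional, sum_monomial_index]

lemma eulerFunctional_C_mul (a : K) (f : K[X]) :
    eulerFunctional (C a * f) = a * eulerFunctional f := by
  rw [C_mul', map_smul, smul_eq_mul]

lemma eulerFunctional_X_pow (n : ℕ) : eulerFunctional (X ^ n : K[X]) = eulerNumber n := by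
  rw [← monomial_one_right_eq_X_pow, eulerFunctional_monomial, one_mul]

lemma eulerFunctional_add_one_pow (q : K[X]) (n : ℕ) :
    eulerFunctional ((q + 1) ^ n) = ∑ k ∈ range (n + 1), n.choose k * eulerFunctional (q ^ k) := by
  rw [add_pow, map_sum]
  refine sum_congr rfl fun k _ => ?_
  rw [one_pow, mul_one, mul_comm, ← C_eq_natCast, eulerFunctional_C_mul]

lemma eulerFunctional_comp_add_one [CharZero K] (f : K[X]) :
    eulerFunctional (f.comp (X + 1)) + eulerFunctional f = 2 * f.eval 0 := by
  induction f using Polynomial.induction_on' with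
  | add f g hf hg =>
    simp only [add_comp, map_add, eval_add]
    linear_combination hf + hg
  | monomial n a =>
    have hrec := congrArg (Rat.cast : ℚ → K) (sum_range_choose_mul_eulerNumber_add n)
    push_cast at hrec
    rw [monomial_comp, eulerFunctional_C_mul, eulerFunctional_add_one_pow, eulerFunctional_monomial,
      eval_monomial]
    simp only [eulerFunctional_X_pow]
    linear_combination a * hrec

lemma sum_range_neg_one_pow_mul_eval [CharZero K] (f : K[X]) (m : ℕ) :
    ∑ u ∈ range m, (-1) ^ u * (2 * f.eval (u : K))
      = eulerFunctional f - (-1) ^ m * eulerFunctional (f.comp (X + C (m : K))) := by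
  induction m with
  | zero => simp
  | succ m ih =>
    have h := eulerFunctional_comp_add_one (f.comp (X + C (m : K)))
    rw [comp_assoc, add_comp, X_comp, C_comp, add_assoc, ← C_1, ← C_add, add_comm 1, eval_comp,
      eval_add, eval_X, eval_C, zero_add] at h
    rw [sum_range_succ, ih]
    push_cast
    linear_combination -(-1) ^ m * h

-- Both `eulerFunctional` and `f ↦ eulerFunctional (f.comp (-X - 1))` satisfy
-- `eulerFunctional_comp_add_one`, which determines the value on `X ^ n` from the lower powers.
lemma eulerFunctional_neg_X_sub_one_pow [CharZero K] (n : ℕ) :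
    eulerFunctional ((-X - 1) ^ n : K[X]) = eulerNumber n := by
  induction n using Nat.strong_induction_on with
  | _ n ih =>
  have hshift := eulerFunctional_comp_add_one ((-X : K[X]) ^ n)
  rw [pow_comp, neg_comp, X_comp, neg_add', eval_pow, eval_neg, eval_X, neg_zero] at hshift
  have hexpand := eulerFunctional_add_one_pow (-X - 1 : K[X]) n
  rw [sub_add_cancel, sum_range_succ, Nat.choose_self, Nat.cast_one, one_mul,
    sum_congr rfl fun k hk => by rw [ih k (mem_range.1 hk)]] at hexpand
  have hrec := congrArg (Rat.cast : ℚ → K) (sum_range_choose_mul_eulerNumber_add n)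
  rw [sum_range_succ, Nat.choose_self] at hrec
  push_cast at hrec
  linear_combination (hshift - hexpand - hrec) / 2

end Functional

lemma eulerNumber_eq_zero_of_even {n : ℕ} (hn : Even n) (hn0 : n ≠ 0) : eulerNumber n = 0 := by
  have hsymm := eulerFunctional_neg_X_sub_one_pow (K := ℚ) n
  rw [← neg_add', hn.neg_pow, eulerFunctional_add_one_pow] at hsymm
  simp only [eulerFunctional_X_pow, Rat.cast_id] at hsymm
  have hrec := sum_range_choose_mul_eulerNumber_add n
  rw [zero_pow hn0] at hrec
  linarith

lemma eulerPoly_eq_eulerFunctional (n : ℕ) (x : ℝ) :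
    eulerPoly n x = eulerFunctional ((X + C x) ^ n) := by
  rw [eulerPoly, add_pow, map_sum]
  refine sum_congr rfl fun l _ => ?_
  rw [← C_pow, ← C_eq_natCast, mul_assoc (X ^ l), ← C_mul, mul_comm (X ^ l),
    eulerFunctional_C_mul, eulerFunctional_X_pow]
  ring

lemma eulerPoly_add_one_add_eulerPoly (n : ℕ) (x : ℝ) :
    eulerPoly n (x + 1) + eulerPoly n x = 2 * x ^ n := by
  have h := eulerFunctional_comp_add_one ((X + C x) ^ n)
  rwa [pow_comp, add_comp, X_comp, C_comp, add_right_comm, eval_pow, eval_add, eval_X, eval_C,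
    zero_add, ← eulerPoly_eq_eulerFunctional, add_assoc, ← C_1, ← C_add,
    ← eulerPoly_eq_eulerFunctional] at h

lemma eulerFun_eq_eulerPoly (p : ℕ) {x : ℝ} (hx0 : 0 ≤ x) (hx1 : x < 1) :
    eulerFun p x = eulerPoly p x := by
  simp [eulerFun, Int.floor_eq_zero_iff.2 ⟨hx0, hx1⟩]

noncomputable def scaledEulerPolynomial (p : ℕ) (M : ℝ) : ℝ[X] :=
  ∑ i ∈ range (p + 1), C (p.choose i * eulerNumber (p - i) * M ^ (p - i)) * X ^ i

lemma eval_scaledEulerPolynomial (p : ℕ) {M : ℝ} (hM : M ≠ 0) (x : ℝ) :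
    (scaledEulerPolynomial p M).eval x = M ^ p * eulerPoly p (x / M) := by
  rw [scaledEulerPolynomial, eval_finsetSum, eulerPoly, mul_sum, ← sum_range_reflect]
  refine sum_congr rfl fun i hi => ?_
  have hip : i ≤ p := Nat.lt_succ_iff.1 (mem_range.1 hi)
  rw [add_tsub_cancel_right, Nat.choose_symm hip, Nat.sub_sub_self hip, eval_mul, eval_C, eval_pow,
    eval_X, div_pow, ← Nat.sub_add_cancel hip, pow_add, Nat.add_sub_cancel]
  field_simp

lemma scaledEulerPolynomial_comp_X_add_C (p : ℕ) {M : ℝ} (hM : M ≠ 0) :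
    (scaledEulerPolynomial p M).comp (X + C M) = 2 * X ^ p - scaledEulerPolynomial p M := by
  refine Polynomial.funext fun x => ?_
  have hshift := eulerPoly_add_one_add_eulerPoly p (x / M)
  rw [div_add_one hM] at hshift
  simp only [eval_comp, eval_add, eval_sub, eval_mul, eval_pow, eval_X, eval_C, eval_ofNat,
    eval_scaledEulerPolynomial p hM]
  have hcancel : M ^ p * (x / M) ^ p = x ^ p := by
    rw [div_pow, mul_div_cancel₀ _ (pow_ne_zero _ hM)]
  linear_combination M ^ p * hshift + 2 * hcancel

lemma eulerFunctional_scaledEulerPolynomial (p : ℕ) (M : ℝ) :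
    eulerFunctional (scaledEulerPolynomial p M)
      = ∑ i ∈ range (p + 1), p.choose i * eulerNumber (p - i) * eulerNumber i * M ^ (p - i) := by
  rw [scaledEulerPolynomial, map_sum]
  refine sum_congr rfl fun i _ => ?_
  rw [eulerFunctional_C_mul, eulerFunctional_X_pow]
  ring

lemma sum_range_neg_one_pow_mul_X_mul_scaledEulerPolynomial (p : ℕ) {m : ℕ} (hm : Odd m) :
    ∑ u ∈ range m, (-1) ^ u * (2 * (X * scaledEulerPolynomial p m).eval (u : ℝ))
      = 2 * eulerNumber (p + 1) + 2 * m * eulerNumber p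
        - m * eulerFunctional (scaledEulerPolynomial p m) := by
  have hm0 : (m : ℝ) ≠ 0 := Nat.cast_ne_zero.2 hm.pos.ne'
  rw [sum_range_neg_one_pow_mul_eval, mul_comp, X_comp,
    scaledEulerPolynomial_comp_X_add_C p hm0, hm.neg_one_pow]
  have hexpand : (X + C (m : ℝ)) * (2 * X ^ p - scaledEulerPolynomial p m)
      = C 2 * X ^ (p + 1) + C (2 * (m : ℝ)) * X ^ p - X * scaledEulerPolynomial p m
        - C (m : ℝ) * scaledEulerPolynomial p m := by
    simp only [C_mul, C_ofNat]
    ring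
  rw [hexpand]
  simp only [map_add, map_sub, eulerFunctional_C_mul, eulerFunctional_X_pow]
  ring

lemma natCast_mul_dcSum_one (p m : ℕ) :
    m * dcSum p 1 m = -∑ u ∈ range m, (-1) ^ u * (2 * (u * eulerPoly p (u / m))) := by
  cases m with
  | zero => simp [dcSum]
  | succ m =>
    rw [dcSum, sum_range_succ', Finset.sum_Ico_eq_sum_range, add_tsub_cancel_right, mul_sum,
      mul_sum]
    simp only [CharP.cast_eq_zero, zero_mul, mul_zero, add_zero]
    rw [← sum_neg_distrib]
    refine sum_congr rfl fun u hu => ?_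
    have hlt : ((1 + u : ℕ) : ℝ) / (m + 1 : ℕ) < 1 := (div_lt_one (by positivity)).2
      (by have := mem_range.1 hu; exact_mod_cast (by omega : 1 + u < m + 1))
    rw [add_tsub_cancel_left, Nat.cast_one, one_mul, eulerFun_eq_eulerPoly p (by positivity) hlt,
      add_comm u 1]
    push_cast
    field_simp
    ring

theorem pow_mul_dcSum_one_general (p m : ℕ) (hpodd : Odd p) (hmodd : Odd m) :
    (m : ℝ) ^ p * dcSum p 1 m =
      ∑ i ∈ Finset.range (p + 1),
          (p.choose i : ℝ) * (eulerNumber (p - i) : ℝ) * (eulerNumber i : ℝ) * (m : ℝ) ^ (p - i)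
        - 2 * (eulerNumber p : ℝ) := by
  have hm : (m : ℝ) ≠ 0 := Nat.cast_ne_zero.2 hmodd.pos.ne'
  have hE : eulerNumber (p + 1) = 0 := eulerNumber_eq_zero_of_even hpodd.add_one (by omega)
  have hsum : ∀ u ∈ range m, (-1) ^ u * (2 * (X * scaledEulerPolynomial p m).eval (u : ℝ))
      = (m : ℝ) ^ p * ((-1) ^ u * (2 * (u * eulerPoly p (u / m)))) := fun u _ => by
    rw [eval_mul, eval_X, eval_scaledEulerPolynomial p hm]
    ring
  refine mul_left_cancel₀ hm ?_
  calc (m : ℝ) * (m ^ p * dcSum p 1 m)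
      = -∑ u ∈ range m, (-1) ^ u * (2 * (X * scaledEulerPolynomial p m).eval (u : ℝ)) := by
        rw [mul_left_comm, natCast_mul_dcSum_one, sum_congr rfl hsum, ← mul_sum, mul_neg]
    _ = _ := by
        rw [sum_range_neg_one_pow_mul_X_mul_scaledEulerPolynomial p hmodd,
          eulerFunctional_scaledEulerPolynomial, hE]
        push_cast
        ring

/-- Theorem 6: for odd `p ≥ 1` and odd positive `m`,
`m^p T_p(1, m) = ∑_{i=0}^{p} C(p,i) E_{p−i} E_i m^{p−i} − 2 E_p`. -/
theorem pow_mul_dcSum_one (p m : ℕ) (hp : 1 ≤ p) (hpodd : Odd p)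
    (hm : 0 < m) (hmodd : Odd m) :
    (m : ℝ) ^ p * dcSum p 1 m =
      ∑ i ∈ Finset.range (p + 1),
          (p.choose i : ℝ) * (eulerNumber (p - i) : ℝ) * (eulerNumber i : ℝ) * (m : ℝ) ^ (p - i)
        - 2 * (eulerNumber p : ℝ) :=
  pow_mul_dcSum_one_general p m hpodd hmodd
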